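/- Pencil of constant-curvature metrics in two dimensions. For smooth positive functions A, B on an open set U ⊆ ℝ², let K[A,B] denote the Gaussian curvature of the orthogonal metric A(dR¹)² + B(dR²)², given by the explicit formula K[A,B] = −(1/(2√(AB)))·(∂_1(∂_1 B/√(AB)) + ∂_2(∂_2 A/√(AB))). Let g_{11}, g_{22} : U → ℝ be smooth and positive, let η_1 be a smooth positive function depending only on the first coordinate and η_2 a smooth positive function depending only on the second coordinate, and suppose K[g_{11}, g_{22}] = 0 and K[g_{11}/η_1, g_{22}/η_2] = 1 on U. Then for every λ ∈ ℝ such that λ + η_1 > 0 and λ + η_2 > 0 on U, one has K[g_{11}/(λ+η_1), g_{22}/(λ+η_2)] = 1 on U. -/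

import Mathlib

open scoped BigOperators

/-- Partial derivative of a scalar function on `ℝ²` in the `k`-th coordinate direction. -/
noncomputable def pd {n : ℕ} (k : Fin n) (f : (Fin n → ℝ) → ℝ) : (Fin n → ℝ) → ℝ :=
  fun x => fderiv ℝ f x (Pi.single k 1)

/-- Gaussian curvature of the orthogonal metric `A(dR¹)² + B(dR²)²`:
`K = −(1/(2√(AB)))·(∂_1(∂_1 B/√(AB)) + ∂_2(∂_2 A/√(AB)))`. -/
noncomputable def gaussK (A B : (Fin 2 → ℝ) → ℝ) : (Fin 2 → ℝ) → ℝ :=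
  fun x =>
    -(1 / (2 * Real.sqrt (A x * B x))) *
      (pd 0 (fun y => pd 0 B y / Real.sqrt (A y * B y)) x +
       pd 1 (fun y => pd 1 A y / Real.sqrt (A y * B y)) x)

open Real Filter

lemma pd_congr {f g : (Fin 2 → ℝ) → ℝ} {x : Fin 2 → ℝ} (h : f =ᶠ[nhds x] g) (k : Fin 2) :
    pd k f x = pd k g x := by
  unfold pd; rw [h.fderiv_eq]

lemma pd_mul {f g : (Fin 2 → ℝ) → ℝ} {x} (hf : DifferentiableAt ℝ f x)
    (hg : DifferentiableAt ℝ g x) (k : Fin 2) :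
    pd k (fun y => f y * g y) x = pd k f x * g x + f x * pd k g x := by
  unfold pd
  rw [fderiv_fun_mul hf hg]
  simp only [ContinuousLinearMap.add_apply, ContinuousLinearMap.smul_apply, smul_eq_mul]
  ring

lemma hasFDerivAt_proj (j : Fin 2) (x : Fin 2 → ℝ) :
    HasFDerivAt (fun y : Fin 2 → ℝ => y j)
      (ContinuousLinearMap.proj j : (Fin 2 → ℝ) →L[ℝ] ℝ) x := by
  exact (ContinuousLinearMap.proj (R := ℝ) (φ := fun _ : Fin 2 => ℝ) j).hasFDerivAt (x := x)

lemma pd_comp_proj {φ : ℝ → ℝ} {x : Fin 2 → ℝ} (j k : Fin 2)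
    (hφ : DifferentiableAt ℝ φ (x j)) :
    pd k (fun y => φ (y j)) x = if k = j then deriv φ (x j) else 0 := by
  have h : HasFDerivAt (fun y : Fin 2 → ℝ => φ (y j))
      (deriv φ (x j) • (ContinuousLinearMap.proj j : (Fin 2 → ℝ) →L[ℝ] ℝ)) x :=
    hφ.hasDerivAt.comp_hasFDerivAt x (hasFDerivAt_proj j x)
  unfold pd
  rw [h.fderiv]
  simp only [ContinuousLinearMap.smul_apply, ContinuousLinearMap.proj_apply,
    Pi.single_apply, smul_eq_mul]
  rcases eq_or_ne k j with h'|h'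
  · subst h'; simp
  · simp only [if_neg h', if_neg (fun h : j = k => h' h.symm), mul_zero]

lemma diffAt_comp_proj {φ : ℝ → ℝ} {x : Fin 2 → ℝ} (j : Fin 2)
    (hφ : DifferentiableAt ℝ φ (x j)) :
    DifferentiableAt ℝ (fun y : Fin 2 → ℝ => φ (y j)) x :=
  hφ.comp x (hasFDerivAt_proj j x).differentiableAt

lemma contDiffOn_pd (k : Fin 2) {f : (Fin 2 → ℝ) → ℝ} {U : Set (Fin 2 → ℝ)} (hU : IsOpen U)
    (hf : ContDiffOn ℝ (⊤ : ℕ∞) f U) : ContDiffOn ℝ (⊤ : ℕ∞) (pd k f) U := by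
  have h : ContDiffOn ℝ (⊤ : ℕ∞) (fderiv ℝ f) U :=
    hf.fderiv_of_isOpen hU (by simp)
  exact (ContinuousLinearMap.apply ℝ ℝ (Pi.single k 1 : Fin 2 → ℝ)).contDiff.comp_contDiffOn h

lemma gaussK_div (U : Set (Fin 2 → ℝ)) (hU : IsOpen U)
    (A B : (Fin 2 → ℝ) → ℝ) (hA : ContDiffOn ℝ (⊤ : ℕ∞) A U) (hB : ContDiffOn ℝ (⊤ : ℕ∞) B U)
    (hApos : ∀ x ∈ U, 0 < A x) (hBpos : ∀ x ∈ U, 0 < B x)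
    (φ ψ : ℝ → ℝ) (hφ : ContDiff ℝ (⊤ : ℕ∞) φ) (hψ : ContDiff ℝ (⊤ : ℕ∞) ψ)
    (hφpos : ∀ x ∈ U, 0 < φ (x 0)) (hψpos : ∀ x ∈ U, 0 < ψ (x 1))
    {x : Fin 2 → ℝ} (hx : x ∈ U) :
    gaussK (fun y => A y / φ (y 0)) (fun y => B y / ψ (y 1)) x =
      -(1 / (2 * Real.sqrt (A x * B x))) *
        (φ (x 0) * pd 0 (fun y => pd 0 B y / Real.sqrt (A y * B y)) x
         + ψ (x 1) * pd 1 (fun y => pd 1 A y / Real.sqrt (A y * B y)) x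
         + deriv φ (x 0) / 2 * (pd 0 B x / Real.sqrt (A x * B x))
         + deriv ψ (x 1) / 2 * (pd 1 A x / Real.sqrt (A x * B x))) := by
  have hUx : U ∈ nhds x := hU.mem_nhds hx
  -- basic facts on U
  have hsq : ∀ y ∈ U, Real.sqrt (A y / φ (y 0) * (B y / ψ (y 1)))
      = Real.sqrt (A y * B y) / (Real.sqrt (φ (y 0)) * Real.sqrt (ψ (y 1))) := by
    intro y hy
    rw [show A y / φ (y 0) * (B y / ψ (y 1)) = (A y * B y) / (φ (y 0) * ψ (y 1)) by ring,
        Real.sqrt_div (mul_nonneg (hApos y hy).le (hBpos y hy).le), Real.sqrt_mul (hφpos y hy).le]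
  have hinner1 : ∀ y ∈ U, pd 0 (fun z => B z / ψ (z 1)) y = pd 0 B y * (ψ (y 1))⁻¹ := by
    intro y hy
    have dB : DifferentiableAt ℝ B y :=
      (hB.contDiffAt (hU.mem_nhds hy)).differentiableAt (by simp)
    have dg : DifferentiableAt ℝ (fun t : ℝ => (ψ t)⁻¹) (y 1) :=
      (hψ.differentiable (by simp)).differentiableAt.inv (ne_of_gt (hψpos y hy))
    calc pd 0 (fun z => B z / ψ (z 1)) y
        = pd 0 (fun z => B z * (ψ (z 1))⁻¹) y := by
          exact congrArg (fun f => pd 0 f y) (funext fun z => div_eq_mul_inv _ _)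
      _ = pd 0 B y * (ψ (y 1))⁻¹ + B y * pd 0 (fun z : Fin 2 → ℝ => (ψ (z 1))⁻¹) y :=
          pd_mul dB (diffAt_comp_proj 1 dg) 0
      _ = pd 0 B y * (ψ (y 1))⁻¹ := by
          rw [pd_comp_proj (φ := fun t : ℝ => (ψ t)⁻¹) 1 0 dg]; simp
  have hinner2 : ∀ y ∈ U, pd 1 (fun z => A z / φ (z 0)) y = pd 1 A y * (φ (y 0))⁻¹ := by
    intro y hy
    have dA : DifferentiableAt ℝ A y :=
      (hA.contDiffAt (hU.mem_nhds hy)).differentiableAt (by simp)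
    have dg : DifferentiableAt ℝ (fun t : ℝ => (φ t)⁻¹) (y 0) :=
      (hφ.differentiable (by simp)).differentiableAt.inv (ne_of_gt (hφpos y hy))
    calc pd 1 (fun z => A z / φ (z 0)) y
        = pd 1 (fun z => A z * (φ (z 0))⁻¹) y := by
          exact congrArg (fun f => pd 1 f y) (funext fun z => div_eq_mul_inv _ _)
      _ = pd 1 A y * (φ (y 0))⁻¹ + A y * pd 1 (fun z : Fin 2 → ℝ => (φ (z 0))⁻¹) y :=
          pd_mul dA (diffAt_comp_proj 0 dg) 1
      _ = pd 1 A y * (φ (y 0))⁻¹ := by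
          rw [pd_comp_proj (φ := fun t : ℝ => (φ t)⁻¹) 0 1 dg]; simp
  -- eventually-equal rewrites of the inner integrands
  have key1 : (fun y => pd 0 (fun z => B z / ψ (z 1)) y /
        Real.sqrt (A y / φ (y 0) * (B y / ψ (y 1)))) =ᶠ[nhds x]
      (fun y => (pd 0 B y / Real.sqrt (A y * B y)) *
        (Real.sqrt (φ (y 0)) * (Real.sqrt (ψ (y 1)))⁻¹)) := by
    filter_upwards [hUx] with y hy
    rw [hinner1 y hy, hsq y hy]
    have ha : 0 < Real.sqrt (φ (y 0)) := Real.sqrt_pos.2 (hφpos y hy)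
    have hs : 0 < Real.sqrt (A y * B y) :=
      Real.sqrt_pos.2 (mul_pos (hApos y hy) (hBpos y hy))
    have hb : 0 < Real.sqrt (ψ (y 1)) := Real.sqrt_pos.2 (hψpos y hy)
    have hb2 : Real.sqrt (ψ (y 1)) * Real.sqrt (ψ (y 1)) = ψ (y 1) :=
      Real.mul_self_sqrt (hψpos y hy).le
    set b := Real.sqrt (ψ (y 1)) with hbdef
    rw [← hb2]
    field_simp
  have key2 : (fun y => pd 1 (fun z => A z / φ (z 0)) y /
        Real.sqrt (A y / φ (y 0) * (B y / ψ (y 1)))) =ᶠ[nhds x]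
      (fun y => (pd 1 A y / Real.sqrt (A y * B y)) *
        (Real.sqrt (ψ (y 1)) * (Real.sqrt (φ (y 0)))⁻¹)) := by
    filter_upwards [hUx] with y hy
    rw [hinner2 y hy, hsq y hy]
    have ha : 0 < Real.sqrt (φ (y 0)) := Real.sqrt_pos.2 (hφpos y hy)
    have hs : 0 < Real.sqrt (A y * B y) :=
      Real.sqrt_pos.2 (mul_pos (hApos y hy) (hBpos y hy))
    have hb : 0 < Real.sqrt (ψ (y 1)) := Real.sqrt_pos.2 (hψpos y hy)
    have ha2 : Real.sqrt (φ (y 0)) * Real.sqrt (φ (y 0)) = φ (y 0) :=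
      Real.mul_self_sqrt (hφpos y hy).le
    set a := Real.sqrt (φ (y 0)) with hadef
    rw [← ha2]
    field_simp
  -- differentiability at x
  have hApx : 0 < A x := hApos x hx
  have hBpx : 0 < B x := hBpos x hx
  have hsx : 0 < Real.sqrt (A x * B x) := Real.sqrt_pos.2 (by positivity)
  have hax : 0 < Real.sqrt (φ (x 0)) := Real.sqrt_pos.2 (hφpos x hx)
  have hbx : 0 < Real.sqrt (ψ (x 1)) := Real.sqrt_pos.2 (hψpos x hx)
  have dA : DifferentiableAt ℝ A x := (hA.contDiffAt hUx).differentiableAt (by simp)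
  have dB : DifferentiableAt ℝ B x := (hB.contDiffAt hUx).differentiableAt (by simp)
  have dS : DifferentiableAt ℝ (fun y => Real.sqrt (A y * B y)) x :=
    (dA.mul dB).sqrt (mul_pos hApx hBpx).ne'
  have dpB : DifferentiableAt ℝ (pd 0 B) x :=
    ((contDiffOn_pd 0 hU hB).contDiffAt hUx).differentiableAt (by simp)
  have dpA : DifferentiableAt ℝ (pd 1 A) x :=
    ((contDiffOn_pd 1 hU hA).contDiffAt hUx).differentiableAt (by simp)
  have dP : DifferentiableAt ℝ (fun y => pd 0 B y / Real.sqrt (A y * B y)) x := by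
    rw [show (fun y : Fin 2 → ℝ => pd 0 B y / Real.sqrt (A y * B y))
        = fun y => pd 0 B y * (Real.sqrt (A y * B y))⁻¹ from
      funext fun y => div_eq_mul_inv _ _]
    exact dpB.mul (dS.inv (ne_of_gt hsx))
  have dQ : DifferentiableAt ℝ (fun y => pd 1 A y / Real.sqrt (A y * B y)) x := by
    rw [show (fun y : Fin 2 → ℝ => pd 1 A y / Real.sqrt (A y * B y))
        = fun y => pd 1 A y * (Real.sqrt (A y * B y))⁻¹ from
      funext fun y => div_eq_mul_inv _ _]
    exact dpA.mul (dS.inv (ne_of_gt hsx))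
  have dsφ : DifferentiableAt ℝ (fun t => Real.sqrt (φ t)) (x 0) :=
    (hφ.differentiable (by simp)).differentiableAt.sqrt (ne_of_gt (hφpos x hx))
  have dsψ : DifferentiableAt ℝ (fun t => Real.sqrt (ψ t)) (x 1) :=
    (hψ.differentiable (by simp)).differentiableAt.sqrt (ne_of_gt (hψpos x hx))
  have dG1 : DifferentiableAt ℝ (fun y : Fin 2 → ℝ => Real.sqrt (φ (y 0))) x :=
    diffAt_comp_proj 0 dsφ
  have dG2 : DifferentiableAt ℝ (fun y : Fin 2 → ℝ => (Real.sqrt (ψ (y 1)))⁻¹) x :=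
    diffAt_comp_proj 1 (dsψ.inv (ne_of_gt hbx))
  have dG1' : DifferentiableAt ℝ (fun y : Fin 2 → ℝ => Real.sqrt (ψ (y 1))) x :=
    diffAt_comp_proj 1 dsψ
  have dG2' : DifferentiableAt ℝ (fun y : Fin 2 → ℝ => (Real.sqrt (φ (y 0)))⁻¹) x :=
    diffAt_comp_proj 0 (dsφ.inv (ne_of_gt hax))
  -- the two main partial derivative computations
  have h₁ : pd 0 (fun y => pd 0 (fun z => B z / ψ (z 1)) y /
        Real.sqrt (A y / φ (y 0) * (B y / ψ (y 1)))) x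
      = pd 0 (fun y => pd 0 B y / Real.sqrt (A y * B y)) x *
          (Real.sqrt (φ (x 0)) * (Real.sqrt (ψ (x 1)))⁻¹)
        + (pd 0 B x / Real.sqrt (A x * B x)) *
          (deriv φ (x 0) / (2 * Real.sqrt (φ (x 0))) * (Real.sqrt (ψ (x 1)))⁻¹) := by
    rw [pd_congr key1 0]
    rw [pd_mul (f := fun y => pd 0 B y / Real.sqrt (A y * B y))
        (g := fun y => Real.sqrt (φ (y 0)) * (Real.sqrt (ψ (y 1)))⁻¹) dP (dG1.mul dG2) 0]
    rw [pd_mul (f := fun y : Fin 2 → ℝ => Real.sqrt (φ (y 0)))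
        (g := fun y : Fin 2 → ℝ => (Real.sqrt (ψ (y 1)))⁻¹) dG1 dG2 0]
    rw [pd_comp_proj (φ := fun t => Real.sqrt (φ t)) 0 0 dsφ,
        pd_comp_proj (φ := fun t => (Real.sqrt (ψ t))⁻¹) 1 0 (dsψ.inv (ne_of_gt hbx))]
    rw [deriv_sqrt (hφ.differentiable (by simp)).differentiableAt (ne_of_gt (hφpos x hx))]
    simp
  have h₂ : pd 1 (fun y => pd 1 (fun z => A z / φ (z 0)) y /
        Real.sqrt (A y / φ (y 0) * (B y / ψ (y 1)))) x
      = pd 1 (fun y => pd 1 A y / Real.sqrt (A y * B y)) x *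
          (Real.sqrt (ψ (x 1)) * (Real.sqrt (φ (x 0)))⁻¹)
        + (pd 1 A x / Real.sqrt (A x * B x)) *
          (deriv ψ (x 1) / (2 * Real.sqrt (ψ (x 1))) * (Real.sqrt (φ (x 0)))⁻¹) := by
    rw [pd_congr key2 1]
    rw [pd_mul (f := fun y => pd 1 A y / Real.sqrt (A y * B y))
        (g := fun y => Real.sqrt (ψ (y 1)) * (Real.sqrt (φ (y 0)))⁻¹) dQ (dG1'.mul dG2') 1]
    rw [pd_mul (f := fun y : Fin 2 → ℝ => Real.sqrt (ψ (y 1)))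
        (g := fun y : Fin 2 → ℝ => (Real.sqrt (φ (y 0)))⁻¹) dG1' dG2' 1]
    rw [pd_comp_proj (φ := fun t => Real.sqrt (ψ t)) 1 1 dsψ,
        pd_comp_proj (φ := fun t => (Real.sqrt (φ t))⁻¹) 0 1 (dsφ.inv (ne_of_gt hax))]
    rw [deriv_sqrt (hψ.differentiable (by simp)).differentiableAt (ne_of_gt (hψpos x hx))]
    simp
  -- final assembly
  simp only [gaussK]
  rw [h₁, h₂, hsq x hx]
  have ha2 : Real.sqrt (φ (x 0)) * Real.sqrt (φ (x 0)) = φ (x 0) :=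
    Real.mul_self_sqrt (hφpos x hx).le
  have hb2 : Real.sqrt (ψ (x 1)) * Real.sqrt (ψ (x 1)) = ψ (x 1) :=
    Real.mul_self_sqrt (hψpos x hx).le
  set a := Real.sqrt (φ (x 0)) with hadef
  set b := Real.sqrt (ψ (x 1)) with hbdef
  rw [← ha2, ← hb2]
  field_simp
  ring

/-- Pencil of constant-curvature metrics in two dimensions: if `g` is flat and `g/η` has
curvature `1`, then `g/(λ+η)` has curvature `1` for every admissible `λ`. -/
theorem pencil_constant_curvature (U : Set (Fin 2 → ℝ)) (hU : IsOpen U)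
    (g₁₁ g₂₂ : (Fin 2 → ℝ) → ℝ)
    (hg₁₁ : ContDiffOn ℝ (⊤ : ℕ∞) g₁₁ U) (hg₂₂ : ContDiffOn ℝ (⊤ : ℕ∞) g₂₂ U)
    (hg₁₁pos : ∀ x ∈ U, 0 < g₁₁ x) (hg₂₂pos : ∀ x ∈ U, 0 < g₂₂ x)
    (η₁ η₂ : ℝ → ℝ) (hη₁ : ContDiff ℝ (⊤ : ℕ∞) η₁) (hη₂ : ContDiff ℝ (⊤ : ℕ∞) η₂)
    (hη₁pos : ∀ x ∈ U, 0 < η₁ (x 0)) (hη₂pos : ∀ x ∈ U, 0 < η₂ (x 1))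
    (hflat : ∀ x ∈ U, gaussK g₁₁ g₂₂ x = 0)
    (hone : ∀ x ∈ U,
      gaussK (fun y => g₁₁ y / η₁ (y 0)) (fun y => g₂₂ y / η₂ (y 1)) x = 1) :
    ∀ lam : ℝ, (∀ x ∈ U, 0 < lam + η₁ (x 0) ∧ 0 < lam + η₂ (x 1)) →
      ∀ x ∈ U,
        gaussK (fun y => g₁₁ y / (lam + η₁ (y 0)))
          (fun y => g₂₂ y / (lam + η₂ (y 1))) x = 1 := by
  intro lam hlam x hx
  have hsx : 0 < Real.sqrt (g₁₁ x * g₂₂ x) :=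
    Real.sqrt_pos.2 (mul_pos (hg₁₁pos x hx) (hg₂₂pos x hx))
  -- flat metric: P + Q = 0
  have hflat' := gaussK_div U hU g₁₁ g₂₂ hg₁₁ hg₂₂ hg₁₁pos hg₂₂pos
    (fun _ => 1) (fun _ => 1) contDiff_const contDiff_const
    (fun _ _ => one_pos) (fun _ _ => one_pos) hx
  simp only [div_one, deriv_const', zero_div, zero_mul, add_zero, one_mul] at hflat'
  have hPQ : pd 0 (fun y => pd 0 g₂₂ y / Real.sqrt (g₁₁ y * g₂₂ y)) x
      + pd 1 (fun y => pd 1 g₁₁ y / Real.sqrt (g₁₁ y * g₂₂ y)) x = 0 := by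
    have h0 := hflat x hx
    rw [hflat'] at h0
    have h2s : -(1 / (2 * Real.sqrt (g₁₁ x * g₂₂ x))) ≠ 0 := by
      simp only [ne_eq, neg_eq_zero, div_eq_zero_iff]
      push_neg
      constructor
      · exact one_ne_zero
      · positivity
    exact (mul_eq_zero.1 h0).resolve_left h2s
  -- curvature one for g/η
  have hone' := gaussK_div U hU g₁₁ g₂₂ hg₁₁ hg₂₂ hg₁₁pos hg₂₂pos
    η₁ η₂ hη₁ hη₂ hη₁pos hη₂pos hx
  have honex := hone x hx
  rw [hone'] at honex
  -- target
  rw [gaussK_div U hU g₁₁ g₂₂ hg₁₁ hg₂₂ hg₁₁pos hg₂₂pos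
    (fun t => lam + η₁ t) (fun t => lam + η₂ t)
    (contDiff_const.add hη₁) (contDiff_const.add hη₂)
    (fun y hy => (hlam y hy).1) (fun y hy => (hlam y hy).2) hx]
  simp only [deriv_const_add] at *
  linear_combination honex + -(1 / (2 * Real.sqrt (g₁₁ x * g₂₂ x))) * lam * hPQ
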